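/- Suppose |ψ⟩ is a unit vector in H_A ⊗ H_B, the operators A_x, B_y are Hermitian with square equal to I, ω_x = ‖Σ_y α_{xy}(I⊗B_y)|ψ⟩‖ > 0, β = Σ_x ω_x, and M_x|ψ⟩ = 0 for all x, where M_x = (1/ω_x)Σ_y α_{xy}(I⊗B_y) − A_x⊗I. Then ⟨ψ|𝓑|ψ⟩ = β, i.e. the Bell expectation attains the value Σ_x ω_x. -/

import Mathlib

/-!
Write `Sₓ = Σ_y α_{xy} (I ⊗ B_y)`, so that `𝓑 = Σₓ (Aₓ ⊗ I) Sₓ`. The condition `Mₓ ψ = 0` says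
`Sₓ ψ = ωₓ (Aₓ ⊗ I) ψ`, and since `(Aₓ ⊗ I)² = I` this gives `(Aₓ ⊗ I) Sₓ ψ = ωₓ ψ`. Hence `ψ` is an
eigenvector of `𝓑` with eigenvalue `Σₓ ωₓ = β`, and `⟨ψ|𝓑|ψ⟩ = β ⟨ψ|ψ⟩ = β`.
-/

open Matrix Kronecker

section

variable {R : Type*} [CommSemiring R] {l m : Type*} [Fintype l] [Fintype m]
  [DecidableEq l] [DecidableEq m]

theorem kronecker_one_mul_one_kronecker (A : Matrix l l R) (B : Matrix m m R) :
    (A ⊗ₖ (1 : Matrix m m R)) * ((1 : Matrix l l R) ⊗ₖ B) = A ⊗ₖ B := by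
  rw [← mul_kronecker_mul, mul_one, one_mul]

theorem kronecker_one_mul_self {A : Matrix l l R} (hA : A * A = 1) :
    (A ⊗ₖ (1 : Matrix m m R)) * (A ⊗ₖ (1 : Matrix m m R)) = 1 := by
  rw [← mul_kronecker_mul, hA, mul_one, one_kronecker_one]

end

theorem mul_mulVec_eq_smul_of_inv_smul_sub_mulVec_eq_zero {K ι : Type*} [Field K]
    [Fintype ι] [DecidableEq ι] {S T : Matrix ι ι K} {ψ : ι → K} {c : K} (hc : c ≠ 0)
    (hT : T * T = 1) (h : (c⁻¹ • S - T) *ᵥ ψ = 0) : (T * S) *ᵥ ψ = c • ψ := by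
  have hS : S *ᵥ ψ = c • T *ᵥ ψ := by
    rw [sub_mulVec, smul_mulVec, sub_eq_zero] at h
    rw [← h, smul_smul, mul_inv_cancel₀ hc, one_smul]
  rw [← mulVec_mulVec, hS, mulVec_smul, mulVec_mulVec, hT, one_mulVec]

theorem stmt18_general (dA dB n m : ℕ) (ψ : Fin dA × Fin dB → ℂ)
    (hψ : star ψ ⬝ᵥ ψ = 1)
    (A : Fin n → Matrix (Fin dA) (Fin dA) ℂ) (B : Fin m → Matrix (Fin dB) (Fin dB) ℂ)
    (hA2 : ∀ x, A x * A x = 1)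
    (α : Fin n → Fin m → ℝ)
    (𝓑 : Matrix (Fin dA × Fin dB) (Fin dA × Fin dB) ℂ)
    (h𝓑 : 𝓑 = ∑ x, ∑ y, (α x y : ℂ) • (A x ⊗ₖ B y))
    (ω : Fin n → ℝ)
    (hωpos : ∀ x, 0 < ω x)
    (β : ℝ) (hβ : β = ∑ x, ω x)
    (M : Fin n → Matrix (Fin dA × Fin dB) (Fin dA × Fin dB) ℂ)
    (hM : ∀ x, M x = (((ω x)⁻¹ : ℝ) : ℂ) • (∑ y, (α x y : ℂ) •
        ((1 : Matrix (Fin dA) (Fin dA) ℂ) ⊗ₖ B y))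
        - A x ⊗ₖ (1 : Matrix (Fin dB) (Fin dB) ℂ))
    (hMψ : ∀ x, (M x) *ᵥ ψ = 0) :
    star ψ ⬝ᵥ (𝓑 *ᵥ ψ) = (β : ℂ) := by
  set S : Fin n → Matrix (Fin dA × Fin dB) (Fin dA × Fin dB) ℂ :=
    fun x => ∑ y, (α x y : ℂ) • ((1 : Matrix (Fin dA) (Fin dA) ℂ) ⊗ₖ B y)
  have h𝓑S : 𝓑 = ∑ x, (A x ⊗ₖ (1 : Matrix (Fin dB) (Fin dB) ℂ)) * S x := by
    simp only [h𝓑, S, Finset.mul_sum, mul_smul_comm, kronecker_one_mul_one_kronecker]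
  have heigen : ∀ x, ((A x ⊗ₖ (1 : Matrix (Fin dB) (Fin dB) ℂ)) * S x) *ᵥ ψ = (ω x : ℂ) • ψ :=
    fun x => mul_mulVec_eq_smul_of_inv_smul_sub_mulVec_eq_zero
      (Complex.ofReal_ne_zero.mpr (hωpos x).ne') (kronecker_one_mul_self (hA2 x))
      (by simpa only [hM x, Complex.ofReal_inv] using hMψ x)
  have h𝓑ψ : 𝓑 *ᵥ ψ = (β : ℂ) • ψ := by
    rw [h𝓑S, sum_mulVec, Finset.sum_congr rfl fun x _ => heigen x, ← Finset.sum_smul, hβ,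
      Complex.ofReal_sum]
  rw [h𝓑ψ, dotProduct_smul, hψ, smul_eq_mul, mul_one]

theorem stmt18 (dA dB n m : ℕ) (ψ : Fin dA × Fin dB → ℂ)
    (hψ : star ψ ⬝ᵥ ψ = 1)
    (A : Fin n → Matrix (Fin dA) (Fin dA) ℂ) (B : Fin m → Matrix (Fin dB) (Fin dB) ℂ)
    (hA : ∀ x, (A x).IsHermitian) (hB : ∀ y, (B y).IsHermitian)
    (hA2 : ∀ x, A x * A x = 1) (hB2 : ∀ y, B y * B y = 1)
    (α : Fin n → Fin m → ℝ)
    (𝓑 : Matrix (Fin dA × Fin dB) (Fin dA × Fin dB) ℂ)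
    (h𝓑 : 𝓑 = ∑ x, ∑ y, (α x y : ℂ) • (A x ⊗ₖ B y))
    (ω : Fin n → ℝ)
    (hω : ∀ x, ω x = Real.sqrt ((star ((∑ y, (α x y : ℂ) •
        ((1 : Matrix (Fin dA) (Fin dA) ℂ) ⊗ₖ B y)) *ᵥ ψ) ⬝ᵥ
        ((∑ y, (α x y : ℂ) • ((1 : Matrix (Fin dA) (Fin dA) ℂ) ⊗ₖ B y)) *ᵥ ψ))).re)
    (hωpos : ∀ x, 0 < ω x)
    (β : ℝ) (hβ : β = ∑ x, ω x)
    (M : Fin n → Matrix (Fin dA × Fin dB) (Fin dA × Fin dB) ℂ)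
    (hM : ∀ x, M x = (((ω x)⁻¹ : ℝ) : ℂ) • (∑ y, (α x y : ℂ) •
        ((1 : Matrix (Fin dA) (Fin dA) ℂ) ⊗ₖ B y))
        - A x ⊗ₖ (1 : Matrix (Fin dB) (Fin dB) ℂ))
    (hMψ : ∀ x, (M x) *ᵥ ψ = 0) :
    star ψ ⬝ᵥ (𝓑 *ᵥ ψ) = (β : ℂ) :=
  stmt18_general dA dB n m ψ hψ A B hA2 α 𝓑 h𝓑 ω hωpos β hβ M hM hMψ
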